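/- Let R be a reverse homogeneous step bisimulation between stable configuration structures C and D, and suppose M ∈ C_C with min(M) = M, N ∈ C_D with min(N) = N, and R(M, N). Then the relation R_{M,N} = { (X \ M, Y \ N) : R(X, Y), min(X) = M, min(Y) = N } is a reverse homogeneous step bisimulation between the liftings C_M and D_N. -/

import Mathlib

/-!
Related configurations of a reverse homogeneous step bisimulation between stable structures
carry, for every label `a`, equally many minimal events labelled `a`: the `a`-labelled minimal
events of `X` form a configuration reachable from `X` by reverse transitions, and the
homogeneous reverse step from it to `∅` can only be matched by undoing as many concurrent,
hence minimal, `a`-labelled events. So when `R` matches a transition between configurations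
whose minimal events are `M`, the matching configurations on the other side keep `N` as their
minimal events. Transitions of the liftings are exactly the transitions between such
configurations, because causality, and hence concurrency, in `X \ M` is the restriction of
causality in `X`.
-/

universe u v

/-- A configuration structure over event type `E` and label alphabet `L`:
a family of finite sets of events (configurations) with a labelling. -/
structure CS (E : Type u) (L : Type v) where
  C : Set (Set E)
  finite : ∀ X ∈ C, X.Finite
  label : E → L

namespace CS

variable {E E₁ E₂ : Type u} {L : Type v}

/-- Stability: rooted, connected, closed under bounded unions and intersections. -/
def IsStable (𝒞 : CS E L) : Prop :=
  ∅ ∈ 𝒞.C ∧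
  (∀ X ∈ 𝒞.C, X ≠ ∅ → ∃ e ∈ X, X \ {e} ∈ 𝒞.C) ∧
  (∀ X ∈ 𝒞.C, ∀ Y ∈ 𝒞.C, ∀ Z ∈ 𝒞.C, X ∪ Y ⊆ Z → X ∪ Y ∈ 𝒞.C) ∧
  (∀ X ∈ 𝒞.C, ∀ Y ∈ 𝒞.C, ∀ Z ∈ 𝒞.C, X ∪ Y ⊆ Z → X ∩ Y ∈ 𝒞.C)

/-- Causality: `d ≤_X e` iff every sub-configuration of `X` containing `e` contains `d`. -/
def le (𝒞 : CS E L) (X : Set E) (d e : E) : Prop :=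
  ∀ Y ∈ 𝒞.C, Y ⊆ X → e ∈ Y → d ∈ Y

/-- Strict causality `d <_X e`. -/
def lt (𝒞 : CS E L) (X : Set E) (d e : E) : Prop :=
  le 𝒞 X d e ∧ d ≠ e

/-- Concurrency within a configuration. -/
def co (𝒞 : CS E L) (X : Set E) (d e : E) : Prop :=
  ¬ lt 𝒞 X d e ∧ ¬ lt 𝒞 X e d

/-- The set of minimal events of a configuration. -/
def minE (𝒞 : CS E L) (X : Set E) : Set E :=
  {e | e ∈ X ∧ ∀ d ∈ X, ¬ lt 𝒞 X d e}

/-- Depth of an event in a configuration: the length of the longest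
causal chain (w.r.t. `<_X`) in `X` up to and including `e`. -/
noncomputable def depth (𝒞 : CS E L) (X : Set E) (e : E) : ℕ :=
  sSup {n | ∃ l : List E, l.length = n ∧ l.Chain' (lt 𝒞 X) ∧
    (∀ x ∈ l, x ∈ X) ∧ l.getLast? = some e}

/-- Multiset of labels of a (finite) set of events. -/
noncomputable def labelMS (𝒞 : CS E L) (S : Set E) : Multiset L := by
  classical exact if h : S.Finite then h.toFinset.val.map 𝒞.label else 0

/-- Single-event forward transition `X —a→ X'`. -/
def FTrans (𝒞 : CS E L) (a : L) (X X' : Set E) : Prop :=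
  X ∈ 𝒞.C ∧ X' ∈ 𝒞.C ∧ X ⊆ X' ∧ ∃ e, X' \ X = {e} ∧ 𝒞.label e = a

/-- Single-event reverse transition `X ⇝a X'`. -/
def RTrans (𝒞 : CS E L) (a : L) (X X' : Set E) : Prop :=
  FTrans 𝒞 a X' X

/-- Step transition `X —A→ X'`: the added events are pairwise concurrent
in `X'` and carry the label multiset `A`. -/
def Step (𝒞 : CS E L) (A : Multiset L) (X X' : Set E) : Prop :=
  X ∈ 𝒞.C ∧ X' ∈ 𝒞.C ∧ X ⊆ X' ∧ ∃ F : Finset E, ↑F = X' \ X ∧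
    (∀ d ∈ F, ∀ e ∈ F, co 𝒞 X' d e) ∧ F.val.map 𝒞.label = A

/-- Reverse step transition `X ⇝A X'`. -/
def RStep (𝒞 : CS E L) (A : Multiset L) (X X' : Set E) : Prop :=
  Step 𝒞 A X' X

/-- Equidepth step: all added events have the same depth in `X'`. -/
def EqStep (𝒞 : CS E L) (A : Multiset L) (X X' : Set E) : Prop :=
  Step 𝒞 A X X' ∧ ∀ d ∈ X' \ X, ∀ e ∈ X' \ X, depth 𝒞 X' d = depth 𝒞 X' e

/-- Reverse equidepth step `X ⇝A= X'`. -/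
def REqStep (𝒞 : CS E L) (A : Multiset L) (X X' : Set E) : Prop :=
  EqStep 𝒞 A X' X

/-- Single-event forward transition with depth: the new event has label `a`
and depth `k` in `X'`. -/
def FTransD (𝒞 : CS E L) (a : L) (k : ℕ) (X X' : Set E) : Prop :=
  X ∈ 𝒞.C ∧ X' ∈ 𝒞.C ∧ X ⊆ X' ∧
    ∃ e, X' \ X = {e} ∧ 𝒞.label e = a ∧ depth 𝒞 X' e = k

/-- Single-event reverse transition with depth. -/
def RTransD (𝒞 : CS E L) (a : L) (k : ℕ) (X X' : Set E) : Prop :=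
  FTransD 𝒞 a k X' X

/-- A multiset of labels is homogeneous if all its elements are equal. -/
def Hom (A : Multiset L) : Prop := ∀ a ∈ A, ∀ b ∈ A, a = b

/-- `R` is a relation between configurations of `𝒞` and `𝒟`, containing `(∅, ∅)`. -/
def Dom (𝒞 : CS E₁ L) (𝒟 : CS E₂ L) (R : Set E₁ → Set E₂ → Prop) : Prop :=
  R ∅ ∅ ∧ ∀ X Y, R X Y → X ∈ 𝒞.C ∧ Y ∈ 𝒟.C

/-- Interleaving bisimulation. -/
def IsIB (𝒞 : CS E₁ L) (𝒟 : CS E₂ L) (R : Set E₁ → Set E₂ → Prop) : Prop :=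
  Dom 𝒞 𝒟 R ∧ ∀ X Y, R X Y →
    (∀ a X', FTrans 𝒞 a X X' → ∃ Y', FTrans 𝒟 a Y Y' ∧ R X' Y') ∧
    (∀ a Y', FTrans 𝒟 a Y Y' → ∃ X', FTrans 𝒞 a X X' ∧ R X' Y')

/-- Reverse bisimulation: an IB also matching reverse single-event transitions. -/
def IsRB (𝒞 : CS E₁ L) (𝒟 : CS E₂ L) (R : Set E₁ → Set E₂ → Prop) : Prop :=
  IsIB 𝒞 𝒟 R ∧ ∀ X Y, R X Y →
    (∀ a X', RTrans 𝒞 a X X' → ∃ Y', RTrans 𝒟 a Y Y' ∧ R X' Y') ∧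
    (∀ a Y', RTrans 𝒟 a Y Y' → ∃ X', RTrans 𝒞 a X X' ∧ R X' Y')

/-- Step bisimulation. -/
def IsSB (𝒞 : CS E₁ L) (𝒟 : CS E₂ L) (R : Set E₁ → Set E₂ → Prop) : Prop :=
  Dom 𝒞 𝒟 R ∧ ∀ X Y, R X Y →
    (∀ A X', Step 𝒞 A X X' → ∃ Y', Step 𝒟 A Y Y' ∧ R X' Y') ∧
    (∀ A Y', Step 𝒟 A Y Y' → ∃ X', Step 𝒞 A X X' ∧ R X' Y')

/-- Reverse step bisimulation: an SB also matching reverse steps. -/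
def IsRSB (𝒞 : CS E₁ L) (𝒟 : CS E₂ L) (R : Set E₁ → Set E₂ → Prop) : Prop :=
  IsSB 𝒞 𝒟 R ∧ ∀ X Y, R X Y →
    (∀ A X', RStep 𝒞 A X X' → ∃ Y', RStep 𝒟 A Y Y' ∧ R X' Y') ∧
    (∀ A Y', RStep 𝒟 A Y Y' → ∃ X', RStep 𝒞 A X X' ∧ R X' Y')

/-- Reverse homogeneous step bisimulation: matches forward single-event
transitions and reverse homogeneous steps. -/
def IsRHSB (𝒞 : CS E₁ L) (𝒟 : CS E₂ L) (R : Set E₁ → Set E₂ → Prop) : Prop :=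
  Dom 𝒞 𝒟 R ∧ ∀ X Y, R X Y →
    (∀ a X', FTrans 𝒞 a X X' → ∃ Y', FTrans 𝒟 a Y Y' ∧ R X' Y') ∧
    (∀ a Y', FTrans 𝒟 a Y Y' → ∃ X', FTrans 𝒞 a X X' ∧ R X' Y') ∧
    (∀ A X', Hom A → RStep 𝒞 A X X' → ∃ Y', RStep 𝒟 A Y Y' ∧ R X' Y') ∧
    (∀ A Y', Hom A → RStep 𝒟 A Y Y' → ∃ X', RStep 𝒞 A X X' ∧ R X' Y')

/-- Reverse homogeneous equidepth step bisimulation. -/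
def IsRHESB (𝒞 : CS E₁ L) (𝒟 : CS E₂ L) (R : Set E₁ → Set E₂ → Prop) : Prop :=
  Dom 𝒞 𝒟 R ∧ ∀ X Y, R X Y →
    (∀ a X', FTrans 𝒞 a X X' → ∃ Y', FTrans 𝒟 a Y Y' ∧ R X' Y') ∧
    (∀ a Y', FTrans 𝒟 a Y Y' → ∃ X', FTrans 𝒞 a X X' ∧ R X' Y') ∧
    (∀ A X', Hom A → REqStep 𝒞 A X X' → ∃ Y', REqStep 𝒟 A Y Y' ∧ R X' Y') ∧
    (∀ A Y', Hom A → REqStep 𝒟 A Y Y' → ∃ X', REqStep 𝒞 A X X' ∧ R X' Y')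

/-- Depth-respecting bisimulation. -/
def IsDB (𝒞 : CS E₁ L) (𝒟 : CS E₂ L) (R : Set E₁ → Set E₂ → Prop) : Prop :=
  Dom 𝒞 𝒟 R ∧ ∀ X Y, R X Y →
    (∀ a k X', FTransD 𝒞 a k X X' → ∃ Y', FTransD 𝒟 a k Y Y' ∧ R X' Y') ∧
    (∀ a k Y', FTransD 𝒟 a k Y Y' → ∃ X', FTransD 𝒞 a k X X' ∧ R X' Y')

/-- Reverse depth-respecting bisimulation. -/
def IsRDB (𝒞 : CS E₁ L) (𝒟 : CS E₂ L) (R : Set E₁ → Set E₂ → Prop) : Prop :=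
  IsDB 𝒞 𝒟 R ∧ ∀ X Y, R X Y →
    (∀ a k X', RTransD 𝒞 a k X X' → ∃ Y', RTransD 𝒟 a k Y Y' ∧ R X' Y') ∧
    (∀ a k Y', RTransD 𝒟 a k Y Y' → ∃ X', RTransD 𝒞 a k X X' ∧ R X' Y')

/-- The lifting of a configuration structure w.r.t. a configuration `M`. -/
def lift (𝒞 : CS E L) (M : Set E) : CS E L where
  C := {Z | ∃ X, X ∈ 𝒞.C ∧ M ⊆ X ∧ minE 𝒞 X = minE 𝒞 M ∧ Z = X \ M}
  finite := by
    rintro Z ⟨X, hX, -, -, rfl⟩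
    exact (𝒞.finite X hX).subset Set.diff_subset
  label := 𝒞.label

/-- Events of `X` of depth at most `n`. -/
def levelLe (𝒞 : CS E L) (X : Set E) (n : ℕ) : Set E :=
  {e | e ∈ X ∧ depth 𝒞 X e ≤ n}

/-- Events of `X` of depth exactly `n`. -/
def levelEq (𝒞 : CS E L) (X : Set E) (n : ℕ) : Set E :=
  {e | e ∈ X ∧ depth 𝒞 X e = n}

/-- No equidepth auto-concurrency: distinct concurrent events never share
both label and depth. -/
def NoEqAC (𝒞 : CS E L) : Prop :=
  ∀ X ∈ 𝒞.C, ∀ d ∈ X, ∀ e ∈ X, co 𝒞 X d e → 𝒞.label d = 𝒞.label e →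
    depth 𝒞 X d = depth 𝒞 X e → d = e

/-- `f` (a set of pairs) is a label- and order-preserving isomorphism
between configurations `X` and `Y`. -/
def IsIso (𝒞 : CS E₁ L) (𝒟 : CS E₂ L) (X : Set E₁) (Y : Set E₂)
    (f : Set (E₁ × E₂)) : Prop :=
  (∀ p ∈ f, p.1 ∈ X ∧ p.2 ∈ Y) ∧
  (∀ d ∈ X, ∃! e, (d, e) ∈ f) ∧
  (∀ e ∈ Y, ∃! d, (d, e) ∈ f) ∧
  (∀ p ∈ f, 𝒞.label p.1 = 𝒟.label p.2) ∧
  (∀ p ∈ f, ∀ q ∈ f, (lt 𝒞 X p.1 q.1 ↔ lt 𝒟 Y p.2 q.2))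

/-- Hereditary history-preserving bisimulation. -/
def IsHH (𝒞 : CS E₁ L) (𝒟 : CS E₂ L)
    (R : Set (Set E₁ × Set E₂ × Set (E₁ × E₂))) : Prop :=
  (∅, ∅, ∅) ∈ R ∧
  ∀ X Y f, (X, Y, f) ∈ R →
    X ∈ 𝒞.C ∧ Y ∈ 𝒟.C ∧ IsIso 𝒞 𝒟 X Y f ∧
    (∀ a X', FTrans 𝒞 a X X' → ∃ Y' f', FTrans 𝒟 a Y Y' ∧
      (X', Y', f') ∈ R ∧ {p ∈ f' | p.1 ∈ X} = f) ∧
    (∀ a Y', FTrans 𝒟 a Y Y' → ∃ X' f', FTrans 𝒞 a X X' ∧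
      (X', Y', f') ∈ R ∧ {p ∈ f' | p.1 ∈ X} = f) ∧
    (∀ a X', RTrans 𝒞 a X X' → ∃ Y' f', RTrans 𝒟 a Y Y' ∧
      (X', Y', f') ∈ R ∧ {p ∈ f | p.1 ∈ X'} = f')

end CS

open CS

theorem Set.sdiff_subset_sdiff_left_iff {α : Type*} {s t u : Set α} (hs : u ⊆ s) (ht : u ⊆ t) :
    s \ u ⊆ t \ u ↔ s ⊆ t := by
  refine ⟨fun h => ?_, Set.sdiff_subset_sdiff_left⟩
  rw [← Set.sdiff_union_of_subset hs, ← Set.sdiff_union_of_subset ht]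
  exact Set.union_subset_union_left u h

namespace CS

open Set

variable {E E₁ E₂ : Type u} {L : Type v}

section

variable {𝒞 : CS E L} {X Y S : Set E} {A : Multiset L} {c d e : E}

theorem le.trans (hcd : le 𝒞 X c d) (hde : le 𝒞 X d e) : le 𝒞 X c e :=
  fun Y hY hYX heY => hcd Y hY hYX (hde Y hY hYX heY)

theorem mem_of_le (hX : X ∈ 𝒞.C) (he : e ∈ X) (hde : le 𝒞 X d e) : d ∈ X :=
  hde X hX subset_rfl he

theorem co_of_mem_minE (hd : d ∈ minE 𝒞 X) (he : e ∈ minE 𝒞 X) : co 𝒞 X d e :=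
  ⟨he.2 d hd.1, hd.2 e he.1⟩

def cone (𝒞 : CS E L) (X : Set E) (e : E) : Set E := {d | le 𝒞 X d e}

theorem mem_cone_self : e ∈ cone 𝒞 X e := fun _ _ _ he => he

theorem cone_subset (hX : X ∈ 𝒞.C) (he : e ∈ X) : cone 𝒞 X e ⊆ X :=
  fun _ hd => mem_of_le hX he hd

def IsDownClosed (𝒞 : CS E L) (X S : Set E) : Prop :=
  ∀ e ∈ S, ∀ d, le 𝒞 X d e → d ∈ S

namespace IsStable

theorem le_iff_of_subset (h : IsStable 𝒞) (hX : X ∈ 𝒞.C) (hY : Y ∈ 𝒞.C) (hYX : Y ⊆ X)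
    (he : e ∈ Y) : le 𝒞 Y d e ↔ le 𝒞 X d e :=
  ⟨fun hle Z hZ hZX heZ =>
    (hle (Z ∩ Y) (h.2.2.2 Z hZ Y hY X hX (union_subset hZX hYX)) inter_subset_right
      ⟨heZ, he⟩).1,
   fun hle Z hZ hZY heZ => hle Z hZ (hZY.trans hYX) heZ⟩

theorem minE_of_subset (h : IsStable 𝒞) (hX : X ∈ 𝒞.C) (hY : Y ∈ 𝒞.C) (hYX : Y ⊆ X) :
    minE 𝒞 Y = minE 𝒞 X ∩ Y := by
  ext m
  constructor
  · rintro ⟨hmY, hmin⟩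
    refine ⟨⟨hYX hmY, fun c hcX hcm => ?_⟩, hmY⟩
    have hcY : c ∈ Y := hcm.1 Y hY hYX hmY
    exact hmin c hcY ⟨(h.le_iff_of_subset hX hY hYX hmY).2 hcm.1, hcm.2⟩
  · rintro ⟨⟨-, hmin⟩, hmY⟩
    exact ⟨hmY, fun c hcY hcm =>
      hmin c (hYX hcY) ⟨(h.le_iff_of_subset hX hY hYX hmY).1 hcm.1, hcm.2⟩⟩

/-- The cone is the least subconfiguration of `X` containing `e`: a minimal one exists by
finiteness, and it lies inside every other because stability makes intersections
configurations. -/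
theorem cone_mem (h : IsStable 𝒞) (hX : X ∈ 𝒞.C) (he : e ∈ X) : cone 𝒞 X e ∈ 𝒞.C := by
  let P : Set (Set E) := {Z | Z ∈ 𝒞.C ∧ Z ⊆ X ∧ e ∈ Z}
  obtain ⟨Z₀, ⟨hZ₀, hZ₀X, heZ₀⟩, hZ₀min⟩ :=
    ((𝒞.finite X hX).finite_subsets.subset fun Z (hZ : Z ∈ P) => hZ.2.1).exists_minimal
      (⟨X, hX, subset_rfl, he⟩ : P.Nonempty)
  have hleast : ∀ Z ∈ P, Z₀ ⊆ Z := fun Z ⟨hZ, hZX, heZ⟩ =>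
    (hZ₀min ⟨h.2.2.2 Z₀ hZ₀ Z hZ X hX (union_subset hZ₀X hZX), inter_subset_left.trans hZ₀X,
      heZ₀, heZ⟩ inter_subset_left).trans inter_subset_right
  convert hZ₀
  exact subset_antisymm (fun d hd => hd Z₀ hZ₀ hZ₀X heZ₀)
    fun d hd Z hZ hZX heZ => hleast Z ⟨hZ, hZX, heZ⟩ hd

/-- Connectedness removes some event `c` from the cone of `e`; `c ≠ e` would leave a smaller
configuration containing `e`, so `c = e`, and then `d ∈ cone e \ {e}` forces `e` in again. -/
theorem le_antisymm (h : IsStable 𝒞) (hX : X ∈ 𝒞.C) (he : e ∈ X) (hde : le 𝒞 X d e)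
    (hed : le 𝒞 X e d) : d = e := by
  by_contra hne
  have hsub := cone_subset hX he
  obtain ⟨c, hc, hcC⟩ := h.2.1 _ (h.cone_mem hX he) (nonempty_of_mem mem_cone_self).ne_empty
  have hce : c = e := by
    by_contra hce
    exact (hc _ hcC (sdiff_subset.trans hsub) ⟨mem_cone_self, Ne.symm hce⟩).2 rfl
  subst hce
  exact (hed _ hcC (sdiff_subset.trans hsub) ⟨hde, hne⟩).2 rfl

theorem mem_of_isDownClosed (h : IsStable 𝒞) (hX : X ∈ 𝒞.C) (hSX : S ⊆ X)
    (hS : IsDownClosed 𝒞 X S) : S ∈ 𝒞.C := by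
  have hunion : (⋃ e ∈ S, cone 𝒞 X e) ∈ 𝒞.C := by
    refine (𝒞.finite X hX).subset hSX |>.induction_on_subset
      (motive := fun t _ => (⋃ e ∈ t, cone 𝒞 X e) ∈ 𝒞.C) S (by simpa using h.1) ?_
    intro a t ha htS _ ht
    rw [biUnion_insert]
    exact h.2.2.1 _ (h.cone_mem hX (hSX ha)) _ ht X hX (union_subset (cone_subset hX (hSX ha))
      (iUnion₂_subset fun e he => cone_subset hX (hSX (htS he))))
  convert hunion
  exact subset_antisymm (fun e he => mem_biUnion he mem_cone_self)
    (iUnion₂_subset fun e he d hd => hS e he d hd)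

theorem mem_of_subset_minE (h : IsStable 𝒞) (hX : X ∈ 𝒞.C) (hS : S ⊆ minE 𝒞 X) : S ∈ 𝒞.C :=
  h.mem_of_isDownClosed hX (fun e he => (hS he).1) fun e he d hde => by
    by_cases hd : d = e
    · exact hd ▸ he
    · exact absurd ⟨hde, hd⟩ ((hS he).2 d (mem_of_le hX (hS he).1 hde))

theorem diff_singleton_mem (h : IsStable 𝒞) (hX : X ∈ 𝒞.C)
    (hmax : ∀ c ∈ X, le 𝒞 X e c → c = e) : X \ {e} ∈ 𝒞.C :=
  h.mem_of_isDownClosed hX sdiff_subset fun c hc _ hdc =>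
    ⟨mem_of_le hX hc.1 hdc, fun hde => hc.2 (hmax c hc.1 (hde ▸ hdc))⟩

end IsStable

def RevReach (𝒞 : CS E L) : Set E → Set E → Prop :=
  Relation.ReflTransGen fun U V => ∃ a, RTrans 𝒞 a U V

/-- Remove an event of `X \ Y` with maximal cone: it is maximal in `X`, so what remains is a
configuration still containing `Y`. -/
theorem IsStable.revReach_of_subset (h : IsStable 𝒞) (hY : Y ∈ 𝒞.C) (hX : X ∈ 𝒞.C)
    (hYX : Y ⊆ X) : RevReach 𝒞 X Y := by
  induction hn : (X \ Y).ncard generalizing X with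
  | zero =>
    have hXY : X \ Y = ∅ := (ncard_eq_zero ((𝒞.finite X hX).subset sdiff_subset)).1 hn
    rw [subset_antisymm (sdiff_eq_empty.1 hXY) hYX]
    exact .refl
  | succ n ih =>
    obtain ⟨e, ⟨heX, heY⟩, hmax⟩ := ((𝒞.finite X hX).subset sdiff_subset).exists_maximalFor
      (cone 𝒞 X) (X \ Y) (nonempty_of_ncard_ne_zero (by omega))
    have hemax : ∀ c ∈ X, le 𝒞 X e c → c = e := fun c hc hec =>
      have hcY : c ∉ Y := fun hcY => heY (hec Y hY hYX hcY)
      h.le_antisymm hX heX (hmax ⟨hc, hcY⟩ (fun d hd => hd.trans hec) mem_cone_self) hec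
    have hX' := h.diff_singleton_mem hX hemax
    refine .head ⟨𝒞.label e, hX', hX, sdiff_subset, e,
      sdiff_sdiff_cancel_left (singleton_subset_iff.2 heX), rfl⟩ (ih hX' ?_ ?_)
    · exact fun a ha => ⟨hYX ha, fun hae => heY (hae ▸ ha)⟩
    · rw [Set.sdiff_sdiff_comm, ncard_sdiff_singleton_of_mem (show e ∈ X \ Y from ⟨heX, heY⟩), hn]
      rfl

theorem labelMS_coe (F : Finset E) : labelMS 𝒞 (F : Set E) = F.val.map 𝒞.label := by
  classical
  simp [labelMS]

theorem card_labelMS (hS : S.Finite) : Multiset.card (labelMS 𝒞 S) = S.ncard := by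
  lift S to Finset E using hS
  rw [labelMS_coe, Multiset.card_map, ncard_coe_finset]
  rfl

theorem mem_labelMS {b : L} (hS : S.Finite) : b ∈ labelMS 𝒞 S ↔ ∃ e ∈ S, 𝒞.label e = b := by
  lift S to Finset E using hS
  simp [labelMS_coe]

theorem IsStable.step_empty_iff (h : IsStable 𝒞) :
    Step 𝒞 A ∅ X ↔ X ∈ 𝒞.C ∧ X ⊆ minE 𝒞 X ∧ labelMS 𝒞 X = A := by
  constructor
  · rintro ⟨-, hX, -, F, hF, hco, rfl⟩
    rw [sdiff_empty] at hF
    subst hF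
    exact ⟨hX, fun e he => ⟨he, fun d hd => (hco d hd e he).1⟩, labelMS_coe F⟩
  · rintro ⟨hX, hXmin, rfl⟩
    lift X to Finset E using 𝒞.finite X hX
    exact ⟨h.1, hX, empty_subset _, X, sdiff_empty.symm,
      fun d hd e he => co_of_mem_minE (hXmin hd) (hXmin he), (labelMS_coe X).symm⟩

theorem RTrans.rstep_singleton {a : L} (h : RTrans 𝒞 a X Y) : RStep 𝒞 {a} X Y := by
  obtain ⟨hY, hX, hYX, e, he, rfl⟩ := h
  exact ⟨hY, hX, hYX, {e}, by simp [he], by simp [co, lt], rfl⟩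

noncomputable def labelCount (𝒞 : CS E L) (S : Set E) (a : L) : ℕ :=
  {e ∈ S | 𝒞.label e = a}.ncard

theorem eq_of_subset_of_labelCount_eq (hY : Y.Finite) (hXY : X ⊆ Y)
    (hcount : ∀ a, labelCount 𝒞 X a = labelCount 𝒞 Y a) : X = Y := by
  refine subset_antisymm hXY fun e he => ?_
  have hfiber : {x ∈ X | 𝒞.label x = 𝒞.label e} = {x ∈ Y | 𝒞.label x = 𝒞.label e} :=
    eq_of_subset_of_ncard_le (fun x hx => ⟨hXY hx.1, hx.2⟩) (hcount _).ge
      (hY.subset fun x hx => hx.1)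
  exact (hfiber.symm ▸ ⟨he, rfl⟩ : e ∈ {x ∈ X | 𝒞.label x = 𝒞.label e}).1

end

theorem hom_singleton (a : L) : Hom ({a} : Multiset L) :=
  fun _ hx _ hy => (Multiset.mem_singleton.1 hx).trans (Multiset.mem_singleton.1 hy).symm

section

variable {𝒞 : CS E₁ L} {𝒟 : CS E₂ L} {R : Set E₁ → Set E₂ → Prop} {X X' : Set E₁}
  {Y Y' : Set E₂}

theorem IsRHSB.symm (hR : IsRHSB 𝒞 𝒟 R) : IsRHSB 𝒟 𝒞 (flip R) :=
  ⟨⟨hR.1.1, fun Y X hXY => (hR.1.2 X Y hXY).symm⟩, fun Y X hXY =>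
    let ⟨h₁, h₂, h₃, h₄⟩ := hR.2 X Y hXY
    ⟨h₂, h₁, h₄, h₃⟩⟩

theorem IsRHSB.eq_empty_of_rel_empty (h𝒟 : IsStable 𝒟) (hR : IsRHSB 𝒞 𝒟 R) (hY : R ∅ Y) :
    Y = ∅ := by
  by_contra hne
  have hYC := (hR.1.2 ∅ Y hY).2
  obtain ⟨f, hf, hYf⟩ := h𝒟.2.1 Y hYC hne
  obtain ⟨X', ⟨-, -, -, F, hF, -, hFf⟩, -⟩ := (hR.2 ∅ Y hY).2.2.2 _ _ (hom_singleton _)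
    (RTrans.rstep_singleton ⟨hYf, hYC, sdiff_subset, f,
      sdiff_sdiff_cancel_left (singleton_subset_iff.2 hf), rfl⟩)
  have hF : F = ∅ := by simpa using hF
  simp [hF] at hFf

theorem IsRHSB.exists_rel_of_revReach (hR : IsRHSB 𝒞 𝒟 R) (hXY : R X Y)
    (hXX' : RevReach 𝒞 X X') : ∃ Y' ⊆ Y, R X' Y' := by
  induction hXX' with
  | refl => exact ⟨Y, subset_rfl, hXY⟩
  | tail _ hstep ih =>
    obtain ⟨Y₁, hY₁Y, hR₁⟩ := ih
    obtain ⟨a, hrt⟩ := hstep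
    obtain ⟨Y₂, hY₂, hR₂⟩ := (hR.2 _ _ hR₁).2.2.1 {a} _ (hom_singleton a) hrt.rstep_singleton
    exact ⟨Y₂, hY₂.2.2.1.trans hY₁Y, hR₂⟩

theorem IsRHSB.labelCount_minE_le (h𝒞 : IsStable 𝒞) (h𝒟 : IsStable 𝒟) (hR : IsRHSB 𝒞 𝒟 R)
    (hXY : R X Y) (a : L) : labelCount 𝒞 (minE 𝒞 X) a ≤ labelCount 𝒟 (minE 𝒟 Y) a := by
  obtain ⟨hX, hY⟩ := hR.1.2 X Y hXY
  set S := {e ∈ minE 𝒞 X | 𝒞.label e = a}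
  have hSmin : S ⊆ minE 𝒞 X := fun e he => he.1
  have hSX : S ⊆ X := fun e he => he.1.1
  have hS : S ∈ 𝒞.C := h𝒞.mem_of_subset_minE hX hSmin
  have hSfin : S.Finite := 𝒞.finite S hS
  obtain ⟨Y₁, hY₁Y, hSY₁⟩ := hR.exists_rel_of_revReach hXY (h𝒞.revReach_of_subset hS hX hSX)
  have hSstep : Step 𝒞 (labelMS 𝒞 S) ∅ S := by
    refine h𝒞.step_empty_iff.2 ⟨hS, ?_, rfl⟩
    rw [h𝒞.minE_of_subset hX hS hSX]
    exact subset_inter hSmin subset_rfl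
  have hSa : ∀ b ∈ labelMS 𝒞 S, b = a := fun b hb => by
    obtain ⟨e, he, rfl⟩ := (mem_labelMS hSfin).1 hb
    exact he.2
  obtain ⟨Y₂, hY₁Y₂, hR₂⟩ := (hR.2 S Y₁ hSY₁).2.2.1 _ ∅
    (fun b hb c hc => (hSa b hb).trans (hSa c hc).symm) hSstep
  rw [hR.eq_empty_of_rel_empty h𝒟 hR₂] at hY₁Y₂
  obtain ⟨hY₁, hY₁min, hlab⟩ := h𝒟.step_empty_iff.1 hY₁Y₂
  have hY₁sub : Y₁ ⊆ {e ∈ minE 𝒟 Y | 𝒟.label e = a} := fun e he => by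
    refine ⟨(h𝒟.minE_of_subset hY hY₁ hY₁Y ▸ hY₁min he).1, hSa _ ?_⟩
    rw [← hlab]
    exact (mem_labelMS (𝒟.finite Y₁ hY₁)).2 ⟨e, he, rfl⟩
  calc labelCount 𝒞 (minE 𝒞 X) a = Multiset.card (labelMS 𝒞 S) := (card_labelMS hSfin).symm
    _ = Y₁.ncard := by rw [← hlab, card_labelMS (𝒟.finite Y₁ hY₁)]
    _ ≤ labelCount 𝒟 (minE 𝒟 Y) a :=
      ncard_le_ncard hY₁sub ((𝒟.finite Y hY).subset fun e he => he.1.1)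

theorem IsRHSB.labelCount_minE_eq (h𝒞 : IsStable 𝒞) (h𝒟 : IsStable 𝒟) (hR : IsRHSB 𝒞 𝒟 R)
    (hXY : R X Y) (a : L) : labelCount 𝒞 (minE 𝒞 X) a = labelCount 𝒟 (minE 𝒟 Y) a :=
  le_antisymm (hR.labelCount_minE_le h𝒞 h𝒟 hXY a) (hR.symm.labelCount_minE_le h𝒟 h𝒞 hXY a)

theorem IsRHSB.minE_eq_of_subset (h𝒞 : IsStable 𝒞) (h𝒟 : IsStable 𝒟) (hR : IsRHSB 𝒞 𝒟 R)
    (hXY : R X Y) (hXY' : R X' Y') (hX : minE 𝒞 X = minE 𝒞 X') (hY : minE 𝒟 Y ⊆ minE 𝒟 Y') :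
    minE 𝒟 Y = minE 𝒟 Y' :=
  eq_of_subset_of_labelCount_eq ((𝒟.finite Y' (hR.1.2 X' Y' hXY').2).subset fun _ he => he.1) hY
    fun a => by
      rw [← hR.labelCount_minE_eq h𝒞 h𝒟 hXY, hX, hR.labelCount_minE_eq h𝒞 h𝒟 hXY']

end

section

variable {𝒞 : CS E L} {M X X' : Set E} {A : Multiset L} {a : L} {d e : E}

def IsLiftable (𝒞 : CS E L) (M X : Set E) : Prop :=
  X ∈ 𝒞.C ∧ M ⊆ X ∧ minE 𝒞 X = minE 𝒞 M

theorem IsLiftable.diff_mem (hX : IsLiftable 𝒞 M X) : X \ M ∈ (lift 𝒞 M).C :=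
  ⟨X, hX.1, hX.2.1, hX.2.2, rfl⟩

theorem isLiftable_of_minE_eq (hX : X ∈ 𝒞.C) (hXmin : minE 𝒞 X = M) (hMmin : minE 𝒞 M = M) :
    IsLiftable 𝒞 M X :=
  ⟨hX, hXmin ▸ fun _ he => he.1, hXmin.trans hMmin.symm⟩

theorem le_lift_of_le (hMX : M ⊆ X) (hd : d ∉ M) (hde : le 𝒞 X d e) :
    le (lift 𝒞 M) (X \ M) d e := by
  rintro _ ⟨X₁, hX₁, hMX₁, -, rfl⟩ hX₁X heX₁
  exact ⟨hde X₁ hX₁ ((sdiff_subset_sdiff_left_iff hMX₁ hMX).1 hX₁X) heX₁.1, hd⟩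

/-- `(cone e ∪ M) \ M` is a configuration of the lifting containing `e`, hence `d`. -/
theorem IsStable.le_of_le_lift (h : IsStable 𝒞) (hM : M ∈ 𝒞.C) (hX : IsLiftable 𝒞 M X)
    (he : e ∈ X \ M) (hde : le (lift 𝒞 M) (X \ M) d e) : le 𝒞 X d e := by
  obtain ⟨hXC, hMX, hXmin⟩ := hX
  have hU : cone 𝒞 X e ∪ M ⊆ X := union_subset (cone_subset hXC he.1) hMX
  have hUC : cone 𝒞 X e ∪ M ∈ 𝒞.C := h.2.2.1 _ (h.cone_mem hXC he.1) _ hM X hXC hU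
  have hUlift : IsLiftable 𝒞 M (cone 𝒞 X e ∪ M) := ⟨hUC, subset_union_right, by
    rw [h.minE_of_subset hXC hUC hU, hXmin]
    exact inter_eq_left.2 fun _ hm => Or.inr hm.1⟩
  have hd := hde _ hUlift.diff_mem (sdiff_subset_sdiff_left hU) ⟨Or.inl mem_cone_self, he.2⟩
  exact hd.1.resolve_right hd.2

theorem IsStable.co_lift_iff (h : IsStable 𝒞) (hM : M ∈ 𝒞.C) (hX : IsLiftable 𝒞 M X)
    (hd : d ∈ X \ M) (he : e ∈ X \ M) : co (lift 𝒞 M) (X \ M) d e ↔ co 𝒞 X d e := by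
  have hlt : ∀ {d e}, d ∈ X \ M → e ∈ X \ M → (lt (lift 𝒞 M) (X \ M) d e ↔ lt 𝒞 X d e) :=
    fun hd he => and_congr_left' ⟨h.le_of_le_lift hM hX he, le_lift_of_le hX.2.1 hd.2⟩
  exact and_congr (not_congr (hlt hd he)) (not_congr (hlt he hd))

theorem ftrans_lift_iff (hX : IsLiftable 𝒞 M X) (hX' : IsLiftable 𝒞 M X') :
    FTrans (lift 𝒞 M) a (X \ M) (X' \ M) ↔ FTrans 𝒞 a X X' := by
  simp only [FTrans, sdiff_sdiff_sdiff_cancel_right hX.2.1,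
    sdiff_subset_sdiff_left_iff hX.2.1 hX'.2.1, hX.1, hX'.1, hX.diff_mem, hX'.diff_mem, true_and]
  rfl

theorem IsStable.step_lift_iff (h : IsStable 𝒞) (hM : M ∈ 𝒞.C) (hX : IsLiftable 𝒞 M X)
    (hX' : IsLiftable 𝒞 M X') : Step (lift 𝒞 M) A (X \ M) (X' \ M) ↔ Step 𝒞 A X X' := by
  simp only [Step, sdiff_sdiff_sdiff_cancel_right hX.2.1,
    sdiff_subset_sdiff_left_iff hX.2.1 hX'.2.1, hX.1, hX'.1, hX.diff_mem, hX'.diff_mem, true_and]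
  refine and_congr_right fun _ => exists_congr fun F => and_congr_right fun hF =>
    and_congr ?_ Iff.rfl
  have hFX' : ∀ d ∈ F, d ∈ X' \ M := fun d hd =>
    have hd' : d ∈ X' \ X := hF ▸ Finset.mem_coe.2 hd
    ⟨hd'.1, fun hdM => hd'.2 (hX.2.1 hdM)⟩
  exact forall₂_congr fun d hd => forall₂_congr fun e he =>
    h.co_lift_iff hM hX' (hFX' d hd) (hFX' e he)

end

section

variable {𝒞 : CS E₁ L} {𝒟 : CS E₂ L} {R : Set E₁ → Set E₂ → Prop} {M Z Z' : Set E₁}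
  {N W : Set E₂}

def liftRel (𝒞 : CS E₁ L) (𝒟 : CS E₂ L) (R : Set E₁ → Set E₂ → Prop) (M : Set E₁)
    (N : Set E₂) : Set E₁ → Set E₂ → Prop :=
  fun Z W => ∃ X Y, R X Y ∧ minE 𝒞 X = M ∧ minE 𝒟 Y = N ∧ Z = X \ M ∧ W = Y \ N

theorem liftRel.symm (h : liftRel 𝒞 𝒟 R M N Z W) : liftRel 𝒟 𝒞 (flip R) N M W Z :=
  let ⟨X, Y, hXY, hX, hY, hZ, hW⟩ := h
  ⟨Y, X, hXY, hY, hX, hW, hZ⟩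

theorem IsRHSB.liftRel_ftrans (h𝒞 : IsStable 𝒞) (h𝒟 : IsStable 𝒟) (hR : IsRHSB 𝒞 𝒟 R)
    (hMmin : minE 𝒞 M = M) (hNmin : minE 𝒟 N = N) (hZW : liftRel 𝒞 𝒟 R M N Z W) {a : L}
    (hZZ' : FTrans (lift 𝒞 M) a Z Z') :
    ∃ W', FTrans (lift 𝒟 N) a W W' ∧ liftRel 𝒞 𝒟 R M N Z' W' := by
  obtain ⟨X, Y, hXY, hXmin, hYmin, rfl, rfl⟩ := hZW
  obtain ⟨X', hX'C, hMX', hX'min, rfl⟩ := hZZ'.2.1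
  have hX : IsLiftable 𝒞 M X := isLiftable_of_minE_eq (hR.1.2 X Y hXY).1 hXmin hMmin
  have hY : IsLiftable 𝒟 N Y := isLiftable_of_minE_eq (hR.1.2 X Y hXY).2 hYmin hNmin
  obtain ⟨Y', hYY', hXY'⟩ :=
    (hR.2 X Y hXY).1 a X' ((ftrans_lift_iff hX ⟨hX'C, hMX', hX'min⟩).1 hZZ')
  have hY'min : minE 𝒟 Y' = N := hYmin ▸ (hR.minE_eq_of_subset h𝒞 h𝒟 hXY hXY'
    (by rw [hXmin, hX'min, hMmin]) ((h𝒟.minE_of_subset hYY'.2.1 hY.1 hYY'.2.2.1).trans_subset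
      inter_subset_left)).symm
  exact ⟨Y' \ N, (ftrans_lift_iff hY (isLiftable_of_minE_eq hYY'.2.1 hY'min hNmin)).2 hYY',
    X', Y', hXY', hX'min.trans hMmin, hY'min, rfl, rfl⟩

theorem IsRHSB.liftRel_rstep (h𝒞 : IsStable 𝒞) (h𝒟 : IsStable 𝒟) (hR : IsRHSB 𝒞 𝒟 R)
    (hM : M ∈ 𝒞.C) (hN : N ∈ 𝒟.C) (hMmin : minE 𝒞 M = M) (hNmin : minE 𝒟 N = N)
    (hZW : liftRel 𝒞 𝒟 R M N Z W) {A : Multiset L} (hA : Hom A)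
    (hZZ' : RStep (lift 𝒞 M) A Z Z') :
    ∃ W', RStep (lift 𝒟 N) A W W' ∧ liftRel 𝒞 𝒟 R M N Z' W' := by
  obtain ⟨X, Y, hXY, hXmin, hYmin, rfl, rfl⟩ := hZW
  obtain ⟨X', hX'C, hMX', hX'min, rfl⟩ := hZZ'.1
  have hX : IsLiftable 𝒞 M X := isLiftable_of_minE_eq (hR.1.2 X Y hXY).1 hXmin hMmin
  have hY : IsLiftable 𝒟 N Y := isLiftable_of_minE_eq (hR.1.2 X Y hXY).2 hYmin hNmin
  obtain ⟨Y', hYY', hXY'⟩ :=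
    (hR.2 X Y hXY).2.2.1 A X' hA ((h𝒞.step_lift_iff hM ⟨hX'C, hMX', hX'min⟩ hX).1 hZZ')
  have hY'min : minE 𝒟 Y' = N := (hR.minE_eq_of_subset h𝒞 h𝒟 hXY' hXY
    (by rw [hXmin, hX'min, hMmin]) ((h𝒟.minE_of_subset hY.1 hYY'.1 hYY'.2.2.1).trans_subset
      inter_subset_left)).trans hYmin
  exact ⟨Y' \ N,
    (h𝒟.step_lift_iff hN (isLiftable_of_minE_eq hYY'.1 hY'min hNmin) hY).2 hYY',
    X', Y', hXY', hX'min.trans hMmin, hY'min, rfl, rfl⟩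

end

end CS

theorem stmt6_general {E₁ E₂ : Type u} {L : Type v} (𝒞 : CS E₁ L) (𝒟 : CS E₂ L)
    (h𝒞 : IsStable 𝒞) (h𝒟 : IsStable 𝒟)
    (R : Set E₁ → Set E₂ → Prop) (hR : IsRHSB 𝒞 𝒟 R)
    (M : Set E₁) (hMmin : minE 𝒞 M = M)
    (N : Set E₂) (hNmin : minE 𝒟 N = N)
    (hMN : R M N) :
    IsRHSB (lift 𝒞 M) (lift 𝒟 N)
      (fun Z W => ∃ X Y, R X Y ∧ minE 𝒞 X = M ∧ minE 𝒟 Y = N ∧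
        Z = X \ M ∧ W = Y \ N) := by
  show IsRHSB (lift 𝒞 M) (lift 𝒟 N) (liftRel 𝒞 𝒟 R M N)
  obtain ⟨hM, hN⟩ := hR.1.2 M N hMN
  refine ⟨⟨⟨M, N, hMN, hMmin, hNmin, Set.sdiff_self.symm, Set.sdiff_self.symm⟩, ?_⟩,
    fun Z W hZW => ⟨?_, ?_, ?_, ?_⟩⟩
  · rintro _ _ ⟨X, Y, hXY, hXmin, hYmin, rfl, rfl⟩
    exact ⟨(isLiftable_of_minE_eq (hR.1.2 X Y hXY).1 hXmin hMmin).diff_mem,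
      (isLiftable_of_minE_eq (hR.1.2 X Y hXY).2 hYmin hNmin).diff_mem⟩
  · exact fun a Z' => hR.liftRel_ftrans h𝒞 h𝒟 hMmin hNmin hZW
  · intro a W' hWW'
    obtain ⟨Z', hZZ', hZW'⟩ := hR.symm.liftRel_ftrans h𝒟 h𝒞 hNmin hMmin hZW.symm hWW'
    exact ⟨Z', hZZ', hZW'.symm⟩
  · exact fun A Z' hA => hR.liftRel_rstep h𝒞 h𝒟 hM hN hMmin hNmin hZW hA
  · intro A W' hA hWW'
    obtain ⟨Z', hZZ', hZW'⟩ := hR.symm.liftRel_rstep h𝒟 h𝒞 hN hM hNmin hMmin hZW.symm hA hWW'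
    exact ⟨Z', hZZ', hZW'.symm⟩

/-- the lifting of a reverse homogeneous step bisimulation by
related configurations of minimal events is an RHSB between the liftings. -/
theorem stmt6 {E₁ E₂ : Type u} {L : Type v} (𝒞 : CS E₁ L) (𝒟 : CS E₂ L)
    (h𝒞 : IsStable 𝒞) (h𝒟 : IsStable 𝒟)
    (R : Set E₁ → Set E₂ → Prop) (hR : IsRHSB 𝒞 𝒟 R)
    (M : Set E₁) (hM : M ∈ 𝒞.C) (hMmin : minE 𝒞 M = M)
    (N : Set E₂) (hN : N ∈ 𝒟.C) (hNmin : minE 𝒟 N = N)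
    (hMN : R M N) :
    IsRHSB (lift 𝒞 M) (lift 𝒟 N)
      (fun Z W => ∃ X Y, R X Y ∧ minE 𝒞 X = M ∧ minE 𝒟 Y = N ∧
        Z = X \ M ∧ W = Y \ N) :=
  stmt6_general 𝒞 𝒟 h𝒞 h𝒟 R hR M hMmin N hNmin hMN
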